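/- A semiregular topological space X is completely regular if and only if its topology is generated by a normal quasi-uniformity, i.e., if and only if there exists a quasi-uniformity 𝓤 on X which is normal and such that for every x ∈ X the sets B(x;U) = {y : (x,y) ∈ U}, U ∈ 𝓤, form a neighborhood base at x. -/

import Mathlib

/-!
A space is completely regular exactly when its topology comes from a uniform structure, and
the uniformity of a uniform space is a normal quasi-uniformity generating its topology.

Conversely, Urysohn's construction goes through with the pair condition
"`c ⊆ closure S` and `closure B(S;V) ⊆ u` for some entourage `V`": normality and halving of
entourages insert an open set between any such pair. Starting from `closure {x}` and
`interior (closure B(x;V))` gives a function that is `0` at `x` and `1` off that set, and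
semiregularity lets that set be chosen inside any neighbourhood of `x`.
-/
open Topology

/-- `B(A;U)`, the `U`-neighborhood of a set `A`. -/
def setBall {X : Type*} (A : Set X) (U : Set (X × X)) : Set X :=
  {y : X | ∃ a ∈ A, (a, y) ∈ U}

/-- A quasi-uniformity on `X` is a filter on `X × X` all of whose members contain
the diagonal, such that every member `U` contains a composition `V ○ V ⊆ U` of
some member `V` with itself. -/
def IsQuasiUniformity {X : Type*} (𝓤 : Filter (X × X)) : Prop :=
  (∀ U ∈ 𝓤, SetRel.id ⊆ U) ∧ (∀ U ∈ 𝓤, ∃ V ∈ 𝓤, SetRel.comp V V ⊆ U)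

/-- A quasi-uniformity on a topological space is normal if
`closure A ⊆ interior (closure B(A;U))` for all `A` and all entourages `U`. -/
def IsNormalQuasiUniformity {X : Type*} [TopologicalSpace X]
    (𝓤 : Filter (X × X)) : Prop :=
  ∀ A : Set X, ∀ U ∈ 𝓤, closure A ⊆ interior (closure (setBall A U))

/-- A quasi-uniformity generates the topology of `X` if for every `x` the
neighborhood filter of `x` is the filter generated by the balls
`B(x;U) = {y | (x,y) ∈ U}`, `U ∈ 𝓤`. -/
def GeneratesTopology {X : Type*} [TopologicalSpace X]
    (𝓤 : Filter (X × X)) : Prop :=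
  ∀ x : X, 𝓝 x = 𝓤.lift' (fun U => {y : X | (x, y) ∈ U})

/-- A topological space is semiregular if every neighborhood `O` of a point `x`
contains `interior (closure U)` for some neighborhood `U` of `x`. -/
def Semiregular (X : Type*) [TopologicalSpace X] : Prop :=
  ∀ x : X, ∀ O ∈ 𝓝 x, ∃ U ∈ 𝓝 x, interior (closure U) ⊆ O

open Set Filter unitInterval

theorem setBall_setBall {X : Type*} (A : Set X) (U V : Set (X × X)) :
    setBall (setBall A U) V = setBall A (SetRel.comp U V) :=
  (SetRel.image_comp U V A).symm

section UniformSpace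

variable {X : Type*} [UniformSpace X]

theorem isQuasiUniformity_uniformity : IsQuasiUniformity (uniformity X) :=
  ⟨fun _ hU => SetRel.id_subset_iff.2 ⟨fun _ => refl_mem_uniformity hU⟩,
    fun _ hU => comp_mem_uniformity_sets hU⟩

theorem closure_subset_interior_image {U : SetRel X X} (hU : U ∈ uniformity X) (A : Set X) :
    closure A ⊆ interior (U.image A) := by
  obtain ⟨V, hV, hVU⟩ := comp_mem_uniformity_sets hU
  refine (UniformSpace.closure_subset_image hV A).trans fun y hy => ?_
  refine mem_interior_iff_mem_nhds.2 (mem_of_superset (UniformSpace.ball_mem_nhds y hV) ?_)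
  calc UniformSpace.ball y V ⊆ SetRel.image V (SetRel.image V A) := fun z hz => ⟨y, hy, hz⟩
    _ = SetRel.image (SetRel.comp V V) A := (SetRel.image_comp V V A).symm
    _ ⊆ U.image A := SetRel.image_subset_image_left hVU

theorem isNormalQuasiUniformity_uniformity : IsNormalQuasiUniformity (uniformity X) :=
  fun A _ hU => (closure_subset_interior_image hU A).trans (interior_mono subset_closure)

theorem generatesTopology_uniformity : GeneratesTopology (uniformity X) :=
  fun _ => nhds_eq_uniformity

end UniformSpace

section NormalQuasiUniformity

variable {X : Type*} [TopologicalSpace X] {𝓤 : Filter (X × X)}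

theorem IsNormalQuasiUniformity.closure_setBall_subset (hnorm : IsNormalQuasiUniformity 𝓤)
    {V W : Set (X × X)} (hW : W ∈ 𝓤) (hWV : SetRel.comp W W ⊆ V) (S : Set X) :
    closure (setBall S W) ⊆ interior (closure (setBall S V)) := by
  refine (hnorm _ W hW).trans (interior_mono (closure_mono ?_))
  rw [setBall_setBall]
  exact SetRel.image_subset_image_left hWV

/-- The pair condition for Urysohn's construction. Passing through `S` is necessary: normality
controls `closure B(S;V)`, whereas nothing controls `B(closure S;V)` for a quasi-uniformity. -/
def UniformlyInside (𝓤 : Filter (X × X)) (c u : Set X) : Prop :=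
  ∃ S : Set X, ∃ V ∈ 𝓤, c ⊆ closure S ∧ closure (setBall S V) ⊆ u

theorem UniformlyInside.exists_between (hcomp : ∀ U ∈ 𝓤, ∃ V ∈ 𝓤, SetRel.comp V V ⊆ U)
    (hnorm : IsNormalQuasiUniformity 𝓤) {c u : Set X} (h : UniformlyInside 𝓤 c u) :
    ∃ v, IsOpen v ∧ c ⊆ v ∧ closure v ⊆ u ∧
      UniformlyInside 𝓤 c v ∧ UniformlyInside 𝓤 (closure v) u := by
  obtain ⟨S, V, hV, hcS, hSu⟩ := h
  obtain ⟨W, hW, hWV⟩ := hcomp V hV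
  obtain ⟨W', hW', hW'W⟩ := hcomp W hW
  have hclosure_v : closure (interior (closure (setBall S W))) ⊆ closure (setBall S W) :=
    closure_minimal interior_subset isClosed_closure
  have hWu : closure (setBall S W) ⊆ u :=
    (hnorm.closure_setBall_subset hW hWV S).trans (interior_subset.trans hSu)
  refine ⟨interior (closure (setBall S W)), isOpen_interior,
    hcS.trans (hnorm S W hW), hclosure_v.trans hWu,
    ⟨S, W', hW', hcS, hnorm.closure_setBall_subset hW' hW'W S⟩,
    ⟨setBall S W, W, hW, hclosure_v, ?_⟩⟩
  rw [setBall_setBall]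
  exact (closure_mono (SetRel.image_subset_image_left hWV)).trans hSu

theorem IsNormalQuasiUniformity.exists_continuous_zero_one
    (hcomp : ∀ U ∈ 𝓤, ∃ V ∈ 𝓤, SetRel.comp V V ⊆ U) (hnorm : IsNormalQuasiUniformity 𝓤)
    (x : X) {V : Set (X × X)} (hV : V ∈ 𝓤) :
    ∃ f : X → I, Continuous f ∧ f x = 0 ∧ EqOn f 1 (interior (closure (setBall {x} V)))ᶜ := by
  obtain ⟨W, hW, hWV⟩ := hcomp V hV
  let c : Urysohns.CU (UniformlyInside 𝓤) :=
    { C := closure {x}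
      U := interior (closure (setBall {x} V))
      P_C_U := ⟨{x}, W, hW, subset_rfl, hnorm.closure_setBall_subset hW hWV {x}⟩
      closed_C := isClosed_closure
      open_U := isOpen_interior
      subset := hnorm {x} V hV
      hP := fun _ h _ _ => h.exists_between hcomp hnorm }
  refine ⟨fun y => ⟨c.lim y, c.lim_mem_Icc y⟩, c.continuous_lim.subtype_mk _, ?_, ?_⟩
  · exact Subtype.ext (c.lim_of_mem_C x (subset_closure rfl))
  · exact fun y hy => Subtype.ext (c.lim_of_notMem_U y hy)

theorem CompletelyRegularSpace.of_isNormalQuasiUniformity (hs : Semiregular X)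
    (hcomp : ∀ U ∈ 𝓤, ∃ V ∈ 𝓤, SetRel.comp V V ⊆ U) (hnorm : IsNormalQuasiUniformity 𝓤)
    (hgen : GeneratesTopology 𝓤) : CompletelyRegularSpace X := by
  refine completelyRegularSpace_iff_isOpen.2 fun x O hO hxO => ?_
  obtain ⟨N, hN, hNO⟩ := hs x O (hO.mem_nhds hxO)
  rw [hgen x] at hN
  obtain ⟨V, hV, hVN⟩ :=
    (mem_lift'_sets (h := fun U => {y | (x, y) ∈ U}) fun _ _ h _ hy => h hy).1 hN
  have hball : setBall {x} V ⊆ N := by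
    rintro y ⟨_, rfl, hy⟩
    exact hVN hy
  obtain ⟨f, hf, hfx, hf1⟩ := hnorm.exists_continuous_zero_one hcomp x hV
  refine ⟨f, hf, hfx, hf1.mono (compl_subset_compl.2 ?_)⟩
  exact (interior_mono (closure_mono hball)).trans hNO

end NormalQuasiUniformity

/-- A semiregular topological space is completely regular if
and only if its topology is generated by a normal quasi-uniformity. -/
theorem completelyRegular_iff_normally_quasiUniformizable {X : Type*}
    [TopologicalSpace X] (hs : Semiregular X) :
    CompletelyRegularSpace X ↔
      ∃ 𝓤 : Filter (X × X), IsQuasiUniformity 𝓤 ∧ IsNormalQuasiUniformity 𝓤 ∧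
        GeneratesTopology 𝓤 := by
  constructor
  · intro h
    obtain ⟨u, rfl⟩ := h.exists_uniformSpace
    exact ⟨uniformity X, isQuasiUniformity_uniformity, isNormalQuasiUniformity_uniformity,
      generatesTopology_uniformity⟩
  · rintro ⟨𝓤, ⟨-, hcomp⟩, hnorm, hgen⟩
    exact .of_isNormalQuasiUniformity hs hcomp hnorm hgen
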